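/- For all IPC formulas Q, X, Y, the formula Q(X ⊃ Y) ⊃ QQX, i.e. [(X ⊃ Y) ⊃ Q] ⊃ [(X ⊃ Q) ⊃ Q], is a theorem of IPC. -/
import Mathlib


/-- Formulas of the Implicational Propositional Calculus: propositional
variables and implication. -/
inductive IPCFormula : Type where
  | var : ℕ → IPCFormula
  | imp : IPCFormula → IPCFormula → IPCFormula

infixr:60 " ⊃' " => IPCFormula.imp

/-- Derivability from a set of hypotheses Γ in the Hilbert system with
axiom schemes IPC1, IPC2, Peirce and the rule modus ponens. -/
inductive IPCDeriv : Set IPCFormula → IPCFormula → Prop where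
  | hyp {Γ : Set IPCFormula} {X : IPCFormula} : X ∈ Γ → IPCDeriv Γ X
  | ipc1 {Γ : Set IPCFormula} (X Y : IPCFormula) :
      IPCDeriv Γ (X ⊃' (Y ⊃' X))
  | ipc2 {Γ : Set IPCFormula} (X Y Z : IPCFormula) :
      IPCDeriv Γ ((X ⊃' (Y ⊃' Z)) ⊃' ((X ⊃' Y) ⊃' (X ⊃' Z)))
  | peirce {Γ : Set IPCFormula} (X Y : IPCFormula) :
      IPCDeriv Γ (((X ⊃' Y) ⊃' X) ⊃' X)
  | mp {Γ : Set IPCFormula} {X Y : IPCFormula} :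
      IPCDeriv Γ (X ⊃' Y) → IPCDeriv Γ X → IPCDeriv Γ Y

/-- A theorem of IPC: derivable from no hypotheses. -/
def IPCThm (X : IPCFormula) : Prop := IPCDeriv ∅ X

/-- Disjunction defined within IPC: X ∨ Y := (X ⊃ Y) ⊃ Y. -/
def IPCFormula.disj (X Y : IPCFormula) : IPCFormula := (X ⊃' Y) ⊃' Y

lemma IPCDeriv.weak {Γ Δ : Set IPCFormula} {X : IPCFormula}
    (h : IPCDeriv Γ X) (hs : Γ ⊆ Δ) : IPCDeriv Δ X := by
  induction h with
  | hyp h => exact .hyp (hs h)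
  | ipc1 X Y => exact .ipc1 X Y
  | ipc2 X Y Z => exact .ipc2 X Y Z
  | peirce X Y => exact .peirce X Y
  | mp _ _ ih1 ih2 => exact .mp ih1 ih2

lemma IPCDeriv.id (Γ : Set IPCFormula) (A : IPCFormula) : IPCDeriv Γ (A ⊃' A) :=
  .mp (.mp (.ipc2 A (A ⊃' A) A) (.ipc1 A (A ⊃' A))) (.ipc1 A A)

lemma IPCDeriv.deduction {Γ : Set IPCFormula} {A B : IPCFormula}
    (h : IPCDeriv (insert A Γ) B) : IPCDeriv Γ (A ⊃' B) := by
  generalize hΔ : insert A Γ = Δ at h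
  induction h with
  | @hyp X hX =>
      subst hΔ
      rcases hX with rfl | hX
      · exact .id _ _
      · exact .mp (.ipc1 _ _) (.hyp hX)
  | ipc1 X Y => exact .mp (.ipc1 _ A) (.ipc1 X Y)
  | ipc2 X Y Z => exact .mp (.ipc1 _ A) (.ipc2 X Y Z)
  | peirce X Y => exact .mp (.ipc1 _ A) (.peirce X Y)
  | mp _ _ ih1 ih2 =>
      exact .mp (.mp (.ipc2 A _ _) ih1) ih2

theorem stmt_10 (Q X Y : IPCFormula) :
    IPCThm (((X ⊃' Y) ⊃' Q) ⊃' ((X ⊃' Q) ⊃' Q)) := by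
  apply IPCDeriv.deduction
  apply IPCDeriv.deduction
  -- hypotheses: h1 : (X⊃Y)⊃Q, h2 : X⊃Q ; goal: Q
  set Γ : Set IPCFormula := insert (X ⊃' Q) (insert ((X ⊃' Y) ⊃' Q) ∅) with hΓ
  have h1 : IPCDeriv Γ ((X ⊃' Y) ⊃' Q) := .hyp (by simp [hΓ])
  have h2 : IPCDeriv Γ (X ⊃' Q) := .hyp (by simp [hΓ])
  -- (Q ⊃ Y) ⊃ Q
  have key : IPCDeriv Γ ((Q ⊃' Y) ⊃' Q) := by
    apply IPCDeriv.deduction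
    have h1' : IPCDeriv (insert (Q ⊃' Y) Γ) ((X ⊃' Y) ⊃' Q) := h1.weak (Set.subset_insert _ _)
    have h2' : IPCDeriv (insert (Q ⊃' Y) Γ) (X ⊃' Q) := h2.weak (Set.subset_insert _ _)
    have hqy : IPCDeriv (insert (Q ⊃' Y) Γ) (Q ⊃' Y) := .hyp (Set.mem_insert _ _)
    have hxy : IPCDeriv (insert (Q ⊃' Y) Γ) (X ⊃' Y) := by
      apply IPCDeriv.deduction
      exact .mp (hqy.weak (Set.subset_insert _ _))
        (.mp (h2'.weak (Set.subset_insert _ _)) (.hyp (Set.mem_insert _ _)))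
    exact .mp h1' hxy
  exact .mp (.peirce Q Y) key
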